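/- arXiv:0812.4161 — 5 statements merged into one kernel-verified Lean document; each statement's English description precedes it below -/
import Mathlib

section
/- Suppose the polyhedron P with the given face-pairing satisfies the Tessellation Condition. Then the quotient space J is Hausdorff. -/
open Metric Set

section
variable {M : Type*} [MetricSpace M] {ι : Type*}

/-- The group generated by the face-pairing isometries. -/
def pairGroup (I : ι → M ≃ᵢ M) : Subgroup (M ≃ᵢ M) :=
  Subgroup.closure (Set.range I)

/-- `G` carries the discrete topology. -/
instance pairGroup.topologicalSpace (I : ι → M ≃ᵢ M) : TopologicalSpace (pairGroup I) := ⊥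

instance pairGroup.discreteTopology (I : ι → M ≃ᵢ M) : DiscreteTopology (pairGroup I) := ⟨rfl⟩

/-- The basic relation on `G × P` generating the gluing equivalence. -/
def pairRel (P : Set M) (face : ι → Set M) (I : ι → M ≃ᵢ M) :
    pairGroup I × P → pairGroup I × P → Prop := fun p q =>
  ∃ s : ι, (p.2 : M) ∈ face s ∧ I s (p.2 : M) = (q.2 : M) ∧
    ((q.1 : M ≃ᵢ M))⁻¹ * (p.1 : M ≃ᵢ M) = I s

/-- The natural map `φ : J → M`, `φ [g, x] = g x`. -/
def pairPhi (P : Set M) (face : ι → Set M) (I : ι → M ≃ᵢ M) :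
    Quot (pairRel P face I) → M :=
  Quot.lift (fun p => (p.1 : M ≃ᵢ M) (p.2 : M)) (by
    rintro ⟨g, x⟩ ⟨h, y⟩ ⟨s, -, hIx, hgh⟩
    have hg : (g : M ≃ᵢ M) = (h : M ≃ᵢ M) * I s := by
      rw [← hgh, mul_inv_cancel_left]
    simp only [hg]
    simp [hIx])

/-- The fibre `π⁻¹ [1, x]`. -/
def fiberAt (P : Set M) (face : ι → Set M) (I : ι → M ≃ᵢ M) (x : P) :
    Set (pairGroup I × P) :=
  {p | Quot.mk (pairRel P face I) p = Quot.mk (pairRel P face I) (1, x)}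

/-- The set `N_{x,δ} ⊆ G × P`. -/
def pairN (P : Set M) (face : ι → Set M) (I : ι → M ≃ᵢ M) (x : P) (δ : ℝ) :
    Set (pairGroup I × P) :=
  {q | ∃ p ∈ fiberAt P face I x, q.1 = p.1 ∧ dist (q.2 : M) (p.2 : M) < δ}

/-- The set `W_{x,δ} = π (N_{x,δ}) ⊆ J`. -/
def pairW (P : Set M) (face : ι → Set M) (I : ι → M ≃ᵢ M) (x : P) (δ : ℝ) :
    Set (Quot (pairRel P face I)) :=
  Quot.mk (pairRel P face I) '' pairN P face I x δ

/-- The action of `h ∈ G` on `J`, `h • [g, x] = [h g, x]`. -/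
def Jmul (P : Set M) (face : ι → Set M) (I : ι → M ≃ᵢ M) (h : pairGroup I) :
    Quot (pairRel P face I) → Quot (pairRel P face I) :=
  Quot.map (fun p => (h * p.1, p.2)) (by
    rintro ⟨g, x⟩ ⟨g', y⟩ ⟨s, hx, hIx, hgg⟩
    exact ⟨s, hx, hIx, by rw [← hgg]; simp [mul_assoc]⟩)

/-- `[P] = {[1, x] : x ∈ P} ⊆ J`. -/
def PJ (P : Set M) (face : ι → Set M) (I : ι → M ≃ᵢ M) :
    Set (Quot (pairRel P face I)) :=
  Set.range fun x : P => Quot.mk (pairRel P face I) (1, x)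

/-- `[P°] = {[1, x] : x ∈ P°} ⊆ J`. -/
def PJint (P : Set M) (face : ι → Set M) (I : ι → M ≃ᵢ M) :
    Set (Quot (pairRel P face I)) :=
  {j | ∃ x : P, (x : M) ∈ interior P ∧ j = Quot.mk (pairRel P face I) (1, x)}

/-- `P` is a polyhedron with a face-pairing. -/
structure IsPolyhedron (P : Set M) (face : ι → Set M) (bar : ι → ι) (I : ι → M ≃ᵢ M) :
    Prop where
  closed : IsClosed P
  locPathConn : LocPathConnectedSpace P
  connected : IsConnected P
  int_nonempty : (interior P).Nonempty
  cl_int : P = closure (interior P)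
  bdry_nonempty : (P \ interior P).Nonempty
  face_nonempty : ∀ s, (face s).Nonempty
  face_union : (⋃ s, face s) = P \ interior P
  bar_invol : ∀ s, bar (bar s) = s
  I_face : ∀ s, I s '' face s = face (bar s)
  I_bar : ∀ s, I (bar s) = (I s)⁻¹

/-- The Tessellation Condition 2.1. -/
structure TessellationCondition (P : Set M) (face : ι → Set M) (I : ι → M ≃ᵢ M) :
    Prop where
  local_cond : ∀ x : P, ∃ δ₀ > 0, ∀ δ : ℝ, 0 < δ → δ ≤ δ₀ →
    Quot.mk (pairRel P face I) ⁻¹' pairW P face I x δ = pairN P face I x δ ∧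
    pairPhi P face I '' pairW P face I x δ = ball (x : M) δ
  global_cond : ∃ (N : Set M) (ε : ℝ) (f : P → ℝ), IsOpen N ∧ 0 < ε ∧
    thickening ε P ⊆ N ∧ (∀ x, 0 < f x) ∧
    Set.BijOn (pairPhi P face I) (⋃ x : P, pairW P face I x (f x)) N

end


section AuxLemmas
variable {M : Type*} [MetricSpace M] {ι : Type*}
variable (P : Set M) (face : ι → Set M) (I : ι → M ≃ᵢ M)

lemma jmul_mk (h g : pairGroup I) (x : P) :
    Jmul P face I h (Quot.mk (pairRel P face I) (g, x)) =
      Quot.mk (pairRel P face I) (h * g, x) := rfl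

lemma continuous_pairPhi : Continuous (pairPhi P face I) := by
  apply continuous_quot_lift
  rw [continuous_iff_continuousAt]
  rintro ⟨g, x⟩
  have h1 : ContinuousAt (fun p : pairGroup I × P => (g : M ≃ᵢ M) (p.2 : M)) (g, x) :=
    (((g : M ≃ᵢ M).continuous.comp continuous_subtype_val).comp continuous_snd).continuousAt
  refine h1.congr ?_
  have hmem : {p : pairGroup I × P | p.1 = g} ∈ nhds (g, x) :=
    ((isOpen_discrete ({g} : Set (pairGroup I))).preimage continuous_fst).mem_nhds rfl
  filter_upwards [hmem] with p hp
  rw [show p.1 = g from hp]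

lemma continuous_jmul (h : pairGroup I) : Continuous (Jmul P face I h) := by
  rw [isQuotientMap_quot_mk.continuous_iff]
  exact continuous_quot_mk.comp
    ((continuous_of_discreteTopology.comp continuous_fst).prodMk continuous_snd)

lemma pairN_open (x : P) (δ : ℝ) : IsOpen (pairN P face I x δ) := by
  have heq : pairN P face I x δ =
      ⋃ p ∈ fiberAt P face I x, ({p.1} ×ˢ {y : P | dist (y : M) (p.2 : M) < δ}) := by
    ext q
    simp only [pairN, Set.mem_setOf_eq, Set.mem_iUnion, Set.mem_prod, Set.mem_singleton_iff]
    tauto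
  rw [heq]
  refine isOpen_biUnion fun p _ => IsOpen.prod (isOpen_discrete _) ?_
  have : {y : P | dist (y : M) (p.2 : M) < δ} = Subtype.val ⁻¹' ball (p.2 : M) δ := rfl
  rw [this]
  exact isOpen_ball.preimage continuous_subtype_val

lemma pairW_open (x : P) (δ : ℝ)
    (hpre : Quot.mk (pairRel P face I) ⁻¹' pairW P face I x δ = pairN P face I x δ) :
    IsOpen (pairW P face I x δ) := by
  rw [← isQuotientMap_quot_mk.isOpen_preimage, hpre]
  exact pairN_open P face I x δ

lemma mem_pairW_self (x : P) {δ : ℝ} (hδ : 0 < δ) :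
    Quot.mk (pairRel P face I) (1, x) ∈ pairW P face I x δ :=
  ⟨(1, x), ⟨(1, x), rfl, rfl, by simpa using hδ⟩, rfl⟩

lemma pairQuot_separated (htess : TessellationCondition P face I)
    (x1 x2 : P) (g : pairGroup I) (hgx : (g : M ≃ᵢ M) (x2 : M) = (x1 : M))
    (hne : Quot.mk (pairRel P face I) (1, x1) ≠ Quot.mk (pairRel P face I) (g, x2)) :
    ∃ U V : Set (Quot (pairRel P face I)), IsOpen U ∧ IsOpen V ∧
      Quot.mk (pairRel P face I) (1, x1) ∈ U ∧
      Quot.mk (pairRel P face I) (g, x2) ∈ V ∧ Disjoint U V := by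
  obtain ⟨δ₁, hδ₁pos, h₁⟩ := htess.local_cond x1
  obtain ⟨δ₂, hδ₂pos, h₂⟩ := htess.local_cond x2
  obtain ⟨N, ε, f, hN, hε, hth, hf, hbij⟩ := htess.global_cond
  have hfx1 := hf x1
  set δ : ℝ := min δ₁ (f x1 / 2) with hδdef
  set δ' : ℝ := min δ₂ (f x1 / 2) with hδ'def
  have hδpos : 0 < δ := lt_min hδ₁pos (by linarith)
  have hδ'pos : 0 < δ' := lt_min hδ₂pos (by linarith)
  obtain ⟨hpre1, -⟩ := h₁ δ hδpos (min_le_left _ _)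
  obtain ⟨hpre2, -⟩ := h₂ δ' hδ'pos (min_le_left _ _)
  refine ⟨pairW P face I x1 δ, Jmul P face I g⁻¹ ⁻¹' pairW P face I x2 δ',
    pairW_open P face I x1 δ hpre1,
    (pairW_open P face I x2 δ' hpre2).preimage (continuous_jmul P face I g⁻¹),
    mem_pairW_self P face I x1 hδpos, ?_, ?_⟩
  · show Jmul P face I g⁻¹ (Quot.mk (pairRel P face I) (g, x2)) ∈ pairW P face I x2 δ'
    rw [jmul_mk, inv_mul_cancel]
    exact mem_pairW_self P face I x2 hδ'pos
  · rw [Set.disjoint_left]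
    rintro z ⟨q, ⟨p1, hp1, hq1, hd1⟩, hz⟩ hzV
    have hp1' : Quot.mk (pairRel P face I) p1 = Quot.mk (pairRel P face I) (1, x1) := hp1
    have hzV' : Quot.mk (pairRel P face I) (g⁻¹ * q.1, q.2) ∈ pairW P face I x2 δ' := by
      have hh : Jmul P face I g⁻¹ z ∈ pairW P face I x2 δ' := hzV
      rw [← hz] at hh
      exact hh
    have hmem2 : ((g⁻¹ * q.1, q.2) : pairGroup I × P) ∈ pairN P face I x2 δ' := by
      rw [← hpre2]; exact hzV'
    obtain ⟨p2, hp2, hq2, hd2⟩ := hmem2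
    have hp2' : Quot.mk (pairRel P face I) p2 = Quot.mk (pairRel P face I) (1, x2) := hp2
    have hgj : q.1 = g * p2.1 := by rw [← hq2, mul_inv_cancel_left]
    have hp11 : p1.1 = g * p2.1 := by rw [← hq1, hgj]
    have hφ1 : (p1.1 : M ≃ᵢ M) (p1.2 : M) = (x1 : M) := by
      have h := congrArg (pairPhi P face I) hp1'
      simpa [pairPhi] using h
    have hφ2 : (p2.1 : M ≃ᵢ M) (p2.2 : M) = (x2 : M) := by
      have h := congrArg (pairPhi P face I) hp2'
      simpa [pairPhi] using h
    have hA : Quot.mk (pairRel P face I) (p1.1, p1.2) ∈ ⋃ x : P, pairW P face I x (f x) :=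
      Set.mem_iUnion.mpr ⟨x1, ⟨(p1.1, p1.2), ⟨p1, hp1, rfl, by simpa using hfx1⟩, rfl⟩⟩
    have hB : Quot.mk (pairRel P face I) (p1.1, p2.2) ∈ ⋃ x : P, pairW P face I x (f x) := by
      refine Set.mem_iUnion.mpr ⟨x1, ⟨(p1.1, p2.2), ⟨p1, hp1, rfl, ?_⟩, rfl⟩⟩
      have ht : dist (p2.2 : M) (p1.2 : M) ≤ dist (p2.2 : M) (q.2 : M) + dist (q.2 : M) (p1.2 : M) :=
        dist_triangle _ _ _
      have hcomm : dist (p2.2 : M) (q.2 : M) = dist (q.2 : M) (p2.2 : M) := dist_comm _ _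
      have h1 : δ ≤ f x1 / 2 := min_le_right _ _
      have h2 : δ' ≤ f x1 / 2 := min_le_right _ _
      rw [hcomm] at ht
      linarith
    have hAB : Quot.mk (pairRel P face I) (p1.1, p1.2) = Quot.mk (pairRel P face I) (p1.1, p2.2) := by
      refine hbij.injOn hA hB ?_
      show (p1.1 : M ≃ᵢ M) (p1.2 : M) = (p1.1 : M ≃ᵢ M) (p2.2 : M)
      have hmul : ((g * p2.1 : pairGroup I) : M ≃ᵢ M) (p2.2 : M) =
          (g : M ≃ᵢ M) ((p2.1 : M ≃ᵢ M) (p2.2 : M)) := rfl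
      rw [hφ1, hp11, hmul, hφ2, hgx]
    apply hne
    calc Quot.mk (pairRel P face I) (1, x1)
        = Quot.mk (pairRel P face I) (p1.1, p1.2) := hp1'.symm
      _ = Quot.mk (pairRel P face I) (p1.1, p2.2) := hAB
      _ = Jmul P face I g (Quot.mk (pairRel P face I) (p2.1, p2.2)) := by rw [jmul_mk, hp11]
      _ = Jmul P face I g (Quot.mk (pairRel P face I) (1, x2)) := by rw [hp2']
      _ = Quot.mk (pairRel P face I) (g, x2) := by rw [jmul_mk, mul_one]

end AuxLemmas

/-- Suppose the polyhedron `P` with the given face-pairing satisfies the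
Tessellation Condition.  Then the quotient space `J` is Hausdorff. -/
theorem pairQuot_t2Space {M : Type*} [MetricSpace M] {ι : Type*}
    (P : Set M) (face : ι → Set M) (bar : ι → ι) (I : ι → M ≃ᵢ M)
    (hpoly : IsPolyhedron P face bar I)
    (hfin : ∀ x : P, (fiberAt P face I x).Finite)
    (htess : TessellationCondition P face I) :
    T2Space (Quot (pairRel P face I)) := by
  constructor
  intro j1 j2 hne
  obtain ⟨⟨g1, x1⟩, rfl⟩ := Quot.exists_rep j1
  obtain ⟨⟨g2, x2⟩, rfl⟩ := Quot.exists_rep j2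
  by_cases hc : (g1 : M ≃ᵢ M) (x1 : M) = (g2 : M ≃ᵢ M) (x2 : M)
  · set g : pairGroup I := g1⁻¹ * g2 with hgdef
    have hgx : (g : M ≃ᵢ M) (x2 : M) = (x1 : M) := by
      have h1 : (g : M ≃ᵢ M) (x2 : M) =
          ((g1 : M ≃ᵢ M))⁻¹ ((g2 : M ≃ᵢ M) (x2 : M)) := rfl
      rw [h1, ← hc]
      exact (g1 : M ≃ᵢ M).symm_apply_apply _
    have hne' : Quot.mk (pairRel P face I) (1, x1) ≠ Quot.mk (pairRel P face I) (g, x2) := by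
      intro h
      apply hne
      have h2 := congrArg (Jmul P face I g1) h
      rwa [jmul_mk, jmul_mk, mul_one, hgdef, mul_inv_cancel_left] at h2
    obtain ⟨U, V, hU, hV, hxU, hxV, hUV⟩ :=
      pairQuot_separated P face I htess x1 x2 g hgx hne'
    refine ⟨Jmul P face I g1⁻¹ ⁻¹' U, Jmul P face I g1⁻¹ ⁻¹' V,
      hU.preimage (continuous_jmul P face I g1⁻¹),
      hV.preimage (continuous_jmul P face I g1⁻¹), ?_, ?_, hUV.preimage _⟩
    · show Jmul P face I g1⁻¹ (Quot.mk (pairRel P face I) (g1, x1)) ∈ U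
      rw [jmul_mk, inv_mul_cancel]
      exact hxU
    · show Jmul P face I g1⁻¹ (Quot.mk (pairRel P face I) (g2, x2)) ∈ V
      rw [jmul_mk]
      exact hxV
  · obtain ⟨U, V, hU, hV, hxU, hxV, hUV⟩ := t2_separation hc
    exact ⟨pairPhi P face I ⁻¹' U, pairPhi P face I ⁻¹' V,
      hU.preimage (continuous_pairPhi P face I),
      hV.preimage (continuous_pairPhi P face I), hxU, hxV, hUV.preimage _⟩
end

section
/- Suppose the polyhedron P with the given face-pairing satisfies the Tessellation Condition. Then the quotient space J is path-connected. -/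
open Metric Set

private lemma joined_map' {X Y : Type*} [TopologicalSpace X] [TopologicalSpace Y]
    {f : X → Y} (hf : Continuous f) {x y : X} (h : Joined x y) : Joined (f x) (f y) :=
  ⟨h.somePath.map hf⟩

/-- Suppose the polyhedron `P` with the given face-pairing satisfies the
Tessellation Condition.  Then the quotient space `J` is path-connected. -/
theorem pairQuot_pathConnectedSpace {M : Type*} [MetricSpace M] {ι : Type*}
    (P : Set M) (face : ι → Set M) (bar : ι → ι) (I : ι → M ≃ᵢ M)
    (hpoly : IsPolyhedron P face bar I)
    (hfin : ∀ x : P, (fiberAt P face I x).Finite)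
    (htess : TessellationCondition P face I) :
    PathConnectedSpace (Quot (pairRel P face I)) := by
  classical
  haveI : LocallyPathConnectedSpace P := hpoly.locPathConn
  haveI : ConnectedSpace P := Subtype.connectedSpace hpoly.connected
  haveI hP : PathConnectedSpace P := pathConnectedSpace_iff_connectedSpace.mpr inferInstance
  obtain ⟨x₀m, hx₀⟩ := hpoly.int_nonempty
  let x₀ : P := ⟨x₀m, interior_subset hx₀⟩
  -- faces are contained in P
  have hfaceP : ∀ s, face s ⊆ P := by
    intro s x hx
    have : x ∈ ⋃ t, face t := Set.mem_iUnion.mpr ⟨s, hx⟩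
    rw [hpoly.face_union] at this
    exact this.1
  -- continuity of x ↦ [g, x]
  have hcont : ∀ g : pairGroup I,
      Continuous (fun x : P => Quot.mk (pairRel P face I) (g, x)) := fun g =>
    continuous_quot_mk.comp (continuous_const.prodMk continuous_id)
  have hsame : ∀ (g : pairGroup I) (x y : P),
      Joined (Quot.mk (pairRel P face I) (g, x)) (Quot.mk (pairRel P face I) (g, y)) :=
    fun g x y => joined_map' (hcont g) (hP.joined x y)
  -- continuity of Jmul
  have hJmul : ∀ h : pairGroup I, Continuous (Jmul P face I h) := by
    intro h
    apply continuous_quot_lift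
    exact continuous_quot_mk.comp
      ((continuous_const.mul continuous_fst).prodMk continuous_snd)
  have hJmul_mk : ∀ (h g : pairGroup I) (x : P),
      Jmul P face I h (Quot.mk (pairRel P face I) (g, x)) =
        Quot.mk (pairRel P face I) (h * g, x) := fun _ _ _ => rfl
  -- the key step
  have key : ∀ g : pairGroup I,
      Joined (Quot.mk (pairRel P face I) (g, x₀))
        (Quot.mk (pairRel P face I) ((1 : pairGroup I), x₀)) := by
    rintro ⟨g, hg⟩
    induction hg using Subgroup.closure_induction with
    | mem a ha =>
      obtain ⟨s, rfl⟩ := ha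
      obtain ⟨x, hx⟩ := hpoly.face_nonempty s
      have hxP : x ∈ P := hfaceP s hx
      have hyP : I s x ∈ P := by
        apply hfaceP (bar s)
        rw [← hpoly.I_face s]
        exact Set.mem_image_of_mem _ hx
      have hmem : I s ∈ pairGroup I := Subgroup.subset_closure ⟨s, rfl⟩
      have heq : Quot.mk (pairRel P face I) ((⟨I s, hmem⟩ : pairGroup I), (⟨x, hxP⟩ : P)) =
          Quot.mk (pairRel P face I) ((1 : pairGroup I), (⟨I s x, hyP⟩ : P)) := by
        apply Quot.sound
        exact ⟨s, hx, rfl, by simp⟩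
      have h1 : Joined (Quot.mk (pairRel P face I) ((⟨I s, hmem⟩ : pairGroup I), x₀))
          (Quot.mk (pairRel P face I) ((⟨I s, hmem⟩ : pairGroup I), (⟨x, hxP⟩ : P))) :=
        hsame _ _ _
      have h2 : Joined (Quot.mk (pairRel P face I) ((⟨I s, hmem⟩ : pairGroup I), (⟨x, hxP⟩ : P)))
          (Quot.mk (pairRel P face I) ((1 : pairGroup I), x₀)) := by
        rw [heq]; exact hsame _ _ _
      exact h1.trans h2
    | one => exact Joined.refl _
    | mul a b ha hb iha ihb =>
      have h1 : Joined (Quot.mk (pairRel P face I) ((⟨a * b, mul_mem ha hb⟩ : pairGroup I), x₀))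
          (Quot.mk (pairRel P face I) ((⟨a, ha⟩ : pairGroup I), x₀)) := by
        have := joined_map' (hJmul ⟨a, ha⟩) ihb
        rw [hJmul_mk, hJmul_mk, mul_one] at this
        exact this
      exact h1.trans iha
    | inv a ha iha =>
      have := joined_map' (hJmul (⟨a, ha⟩ : pairGroup I)⁻¹) iha
      rw [hJmul_mk, hJmul_mk, mul_one, inv_mul_cancel] at this
      exact this.symm
  constructor
  · exact ⟨Quot.mk _ ((1 : pairGroup I), x₀)⟩
  · intro a b
    have h : ∀ c : Quot (pairRel P face I),
        Joined c (Quot.mk (pairRel P face I) ((1 : pairGroup I), x₀)) := by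
      intro c
      induction c using Quot.ind with
      | mk p =>
        obtain ⟨g, x⟩ := p
        exact (hsame g x x₀).trans (key g)
    exact (h a).trans (h b).symm
end

section
/- Suppose the polyhedron P with the given face-pairing satisfies the Tessellation Condition and that M is connected. Then φ : J → M is surjective. -/
open Metric Set

/-- Suppose the polyhedron `P` with the given face-pairing satisfies the
Tessellation Condition and that `M` is connected.
Then `φ : J → M` is surjective. -/
theorem pairPhi_surjective {M : Type*} [MetricSpace M] [ConnectedSpace M] {ι : Type*}
    (P : Set M) (face : ι → Set M) (bar : ι → ι) (I : ι → M ≃ᵢ M)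
    (hpoly : IsPolyhedron P face bar I)
    (hfin : ∀ x : P, (fiberAt P face I x).Finite)
    (htess : TessellationCondition P face I) :
    Function.Surjective (pairPhi P face I) := by
  obtain ⟨N, ε, f, hNopen, hε, hthick, hf, hbij⟩ := htess.global_cond
  set R := Set.range (pairPhi P face I) with hRdef
  -- N is contained in the range
  have hNR : N ⊆ R := fun y hy => by
    obtain ⟨j, _, hjy⟩ := hbij.surjOn hy
    exact ⟨j, hjy⟩
  -- every point of R has the form g x with g ∈ G, x ∈ P
  have hmem : ∀ y ∈ R, ∃ (g : pairGroup I) (x : P), (g : M ≃ᵢ M) (x : M) = y := by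
    rintro y ⟨j, rfl⟩
    induction j using Quot.ind with
    | _ p => exact ⟨p.1, p.2, rfl⟩
  -- R is G-invariant
  have hinv : ∀ (g : pairGroup I), ∀ y ∈ R, (g : M ≃ᵢ M) y ∈ R := by
    rintro g y ⟨j, rfl⟩
    induction j using Quot.ind with
    | _ p => exact ⟨Quot.mk _ (g * p.1, p.2), rfl⟩
  -- P ⊆ N
  have hPN : P ⊆ N := fun x hx => hthick (self_subset_thickening hε P hx)
  -- R is open
  have hopen : IsOpen R := by
    rw [Metric.isOpen_iff]
    intro y hy
    obtain ⟨g, x, rfl⟩ := hmem y hy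
    obtain ⟨r, hr, hball⟩ := Metric.isOpen_iff.mp hNopen (x : M) (hPN x.2)
    refine ⟨r, hr, fun z hz => ?_⟩
    have hz' : ((g : M ≃ᵢ M).symm z) ∈ ball (x : M) r := by
      have key : dist ((g : M ≃ᵢ M).symm z) (x : M) = dist z ((g : M ≃ᵢ M) (x : M)) := by
        conv_rhs => rw [← (g : M ≃ᵢ M).apply_symm_apply z]
        exact ((g : M ≃ᵢ M).dist_eq _ _).symm
      simpa [Metric.mem_ball, key] using hz
    have hzR : ((g : M ≃ᵢ M).symm z) ∈ R := hNR (hball hz')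
    have := hinv g _ hzR
    simpa using this
  -- R is closed
  have hclosed : IsClosed R := by
    rw [← closure_subset_iff_isClosed]
    intro y hy
    obtain ⟨z, hzR, hdz⟩ := Metric.mem_closure_iff.mp hy ε hε
    obtain ⟨g, x, rfl⟩ := hmem z hzR
    have hthk : ((g : M ≃ᵢ M).symm y) ∈ thickening ε P := by
      rw [Metric.mem_thickening_iff]
      refine ⟨(x : M), x.2, ?_⟩
      have key : dist ((g : M ≃ᵢ M).symm y) (x : M) = dist y ((g : M ≃ᵢ M) (x : M)) := by
        conv_rhs => rw [← (g : M ≃ᵢ M).apply_symm_apply y]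
        exact ((g : M ≃ᵢ M).dist_eq _ _).symm
      simpa [key] using hdz
    have hyR : ((g : M ≃ᵢ M).symm y) ∈ R := hNR (hthick hthk)
    have := hinv g _ hyR
    simpa using this
  -- R is nonempty
  obtain ⟨x0, hx0⟩ := hpoly.int_nonempty
  have hne : R.Nonempty := ⟨x0, hNR (hPN (interior_subset hx0))⟩
  have : R = Set.univ := IsClopen.eq_univ ⟨hclosed, hopen⟩ hne
  intro y
  have : y ∈ R := this ▸ Set.mem_univ y
  exact this
end

section
/- [P] is a fundamental region for the action of G on J; that is, J = ⋃_{g∈G} g·[P], and if g₁·[P°] ∩ g₂·[P°] ≠ ∅ for g₁, g₂ ∈ G, then g₁ = g₂. -/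
open Metric Set

/-- `[P]` is a fundamental region for the action of `G` on `J`:
`J = ⋃_{g ∈ G} g • [P]`, and if `g₁ • [P°] ∩ g₂ • [P°] ≠ ∅` for `g₁, g₂ ∈ G`,
then `g₁ = g₂`. -/
theorem PJ_fundamentalRegion {M : Type*} [MetricSpace M] {ι : Type*}
    (P : Set M) (face : ι → Set M) (bar : ι → ι) (I : ι → M ≃ᵢ M)
    (hpoly : IsPolyhedron P face bar I) :
    (⋃ g : pairGroup I, Jmul P face I g '' PJ P face I) = Set.univ ∧
    ∀ g₁ g₂ : pairGroup I,
      (Jmul P face I g₁ '' PJint P face I ∩ Jmul P face I g₂ '' PJint P face I).Nonempty →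
      g₁ = g₂ := by
  have hface : ∀ s, face s ⊆ P \ interior P := by
    intro s
    rw [← hpoly.face_union]
    exact Set.subset_iUnion _ s
  constructor
  · ext j
    simp only [Set.mem_iUnion, Set.mem_univ, iff_true]
    obtain ⟨⟨g, x⟩⟩ := j
    refine ⟨g, Quot.mk _ (1, x), ⟨x, rfl⟩, ?_⟩
    show Quot.mk _ (g * 1, x) = Quot.mk _ (g, x)
    rw [mul_one]
  · rintro g₁ g₂ ⟨j, ⟨j₁, ⟨x, hxint, rfl⟩, hj₁⟩, ⟨j₂, ⟨y, hyint, rfl⟩, hj₂⟩⟩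
    have heq : Quot.mk (pairRel P face I) (g₁ * 1, x) =
        Quot.mk (pairRel P face I) (g₂ * 1, y) := by
      rw [← hj₂] at hj₁; exact hj₁
    have key : ∀ a b : pairGroup I × P,
        Relation.EqvGen (pairRel P face I) a b →
        ((a.2 : M) ∈ interior P ∨ (b.2 : M) ∈ interior P) → a = b := by
      intro a b h
      induction h with
      | rel a b hr =>
        intro hint
        obtain ⟨s, hx, hIx, -⟩ := hr
        rcases hint with h | h
        · exact absurd h (hface s hx).2
        · have : (b.2 : M) ∈ face (bar s) := by
            rw [← hpoly.I_face s, ← hIx]; exact Set.mem_image_of_mem _ hx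
          exact absurd h (hface (bar s) this).2
      | refl a => intro _; rfl
      | symm a b _ ih => intro hint; exact (ih hint.symm).symm
      | trans a c b _ _ ih1 ih2 =>
        intro hint
        rcases hint with h | h
        · have hac := ih1 (Or.inl h)
          rw [hac] at h ⊢
          exact ih2 (Or.inl h)
        · have hcb := ih2 (Or.inr h)
          rw [← hcb] at h
          have := ih1 (Or.inr h)
          rw [this, hcb]
    have := key (g₁ * 1, x) (g₂ * 1, y)
      ((Quot.eq.mp heq))
      (Or.inl hxint)
    have h1 : g₁ * 1 = g₂ * 1 := congrArg Prod.fst this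
    simpa using h1
end

section
/- Let P be as below with a face-pairing satisfying the cornerless-polyhedron conditions including Strong Simplicity. If x ∈ ∂P does not belong to any edge, then x belongs to exactly one face s ∈ S, and π⁻¹[1,x] = {(1,x), (I_{s̄}, I_s x)}; in particular, the only formal neighbours of P at x are P and I_{s̄}P. -/
open Metric Set

section
variable {M : Type*} [MetricSpace M] {ι : Type*} {η : Type*}

/-- The cornerless-polyhedron conditions on the faces, edges and face-pairing,
including Strong Simplicity with distance gap `d`.  Here `edge e` are the
edges, `bdry s` is the boundary of the face `face s`, and `diamond e s` means
that `e` is an edge of the face `s` (written `e ⋄ s`). -/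
structure IsCornerless (P : Set M) (face : ι → Set M) (bar : ι → ι)
    (I : ι → M ≃ᵢ M) (edge : η → Set M) (bdry : ι → Set M)
    (diamond : η → ι → Prop) (d : ℝ) : Prop where
  finite_faces : Finite ι
  finite_edges : Finite η
  face_inj : Function.Injective face
  edge_inj : Function.Injective edge
  face_closed : ∀ s, IsClosed (face s)
  edge_nonempty : ∀ e, (edge e).Nonempty
  edge_connected : ∀ e, IsConnected (edge e)
  /-- `∂s` is the union of the edges of `s`. -/
  bdry_eq : ∀ s, bdry s = ⋃ e ∈ {e : η | diamond e s}, edge e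
  bdry_subset_face : ∀ s, bdry s ⊆ face s
  /-- the union `∂s = ⊔_{e ⋄ s} e` is disjoint. -/
  edges_disjoint : ∀ s e e', diamond e s → diamond e' s → e ≠ e' →
    Disjoint (edge e) (edge e')
  /-- each edge belongs to exactly two distinct faces. -/
  two_faces : ∀ e : η, ∃ s₁ s₂ : ι, s₁ ≠ s₂ ∧ diamond e s₁ ∧ diamond e s₂ ∧
    ∀ s, diamond e s → s = s₁ ∨ s = s₂
  /-- `e ⋄ s` implies `I_s e ⋄ s̄`. -/
  I_edge : ∀ e s, diamond e s → ∃ e', diamond e' (bar s) ∧ I s '' edge e = edge e'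
  /-- the intersection of two distinct faces lies in the boundary of both. -/
  inter_subset_bdry : ∀ s s', s ≠ s' → face s ∩ face s' ⊆ bdry s ∩ bdry s'
  /-- the intersection of two distinct faces is a union of entire edges. -/
  inter_union_edges : ∀ s s', s ≠ s' → ∃ T : Set η,
    face s ∩ face s' = ⋃ e ∈ T, edge e
  d_pos : 0 < d
  /-- the distance between two distinct edges is greater than `d`. -/
  dist_edges : ∀ e e', e ≠ e' → ∀ x ∈ edge e, ∀ y ∈ edge e', d < dist x y
  /-- the distance between two distinct faces that do not share an edge is
  greater than `d`. -/
  dist_faces : ∀ s s', s ≠ s' → (¬ ∃ e, diamond e s ∧ diamond e s') →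
    ∀ x ∈ face s, ∀ y ∈ face s', d < dist x y
  /-- the distance between a face and an edge not included in it is greater
  than `d`. -/
  dist_face_edge : ∀ s e, ¬ edge e ⊆ face s → ∀ x ∈ face s, ∀ y ∈ edge e,
    d < dist x y

/-- The partial cycle isometries `I_0 = 1`, `I_j = I_{s_j} ⋯ I_{s_1}` of a
cycle of edges with face sequence `s`. -/
def cycIso (I : ι → M ≃ᵢ M) (s : ℕ → ι) : ℕ → M ≃ᵢ M
  | 0 => 1
  | j + 1 => I (s (j + 1)) * cycIso I s j

/-- `s̄₀ ⋄ e ⋄ s₁ → s̄₁ ⋄ I_1 e ⋄ s₂ → ⋯` is a geometric cycle of edges of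
length `n`: the face sequence is `n`-periodic, the `j`-th term of the cycle is
`s̄_j ⋄ I_j e ⋄ s_{j+1}` (so that `I_j '' e` is again an edge), the cycle
isometry `I_n = I_{s_n} ⋯ I_{s_1}` is the identity, and the cycle is a
shortest one with identity cycle isometry. -/
structure IsGeometricCycle (face : ι → Set M) (bar : ι → ι) (I : ι → M ≃ᵢ M)
    (edge : η → Set M) (diamond : η → ι → Prop) (e : η) (n : ℕ) (s : ℕ → ι) :
    Prop where
  n_pos : 0 < n
  periodic : ∀ j, s (j + n) = s j
  steps : ∀ j < n, ∃ ej : η, edge ej = cycIso I s j '' edge e ∧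
    diamond ej (bar (s j)) ∧ diamond ej (s (j + 1))
  cycle_id : cycIso I s n = 1
  shortest : ∀ m, 0 < m → m < n → cycIso I s m ≠ 1

end


/-- Let `P` be a cornerless polyhedron with a face-pairing satisfying Strong
Simplicity.  If `x ∈ ∂P` does not belong to any edge, then `x` belongs to
exactly one face `s`, and `π⁻¹ [1, x] = {(1, x), (I_{s̄}, I_s x)}`; in
particular, the only formal neighbours of `P` at `x` are `P` and `I_{s̄} P`. -/
theorem fiberAt_of_not_mem_edge {M : Type*} [MetricSpace M] {ι : Type*} {η : Type*}
    (P : Set M) (face : ι → Set M) (bar : ι → ι) (I : ι → M ≃ᵢ M)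
    (edge : η → Set M) (bdry : ι → Set M) (diamond : η → ι → Prop) (d : ℝ)
    (hpoly : IsPolyhedron P face bar I)
    (hcorner : IsCornerless P face bar I edge bdry diamond d)
    (x : P) (hx : (x : M) ∈ P \ interior P) (hxe : ∀ e : η, (x : M) ∉ edge e) :
    ∃ s : ι, (x : M) ∈ face s ∧ (∀ s', (x : M) ∈ face s' → s' = s) ∧
      fiberAt P face I x = {p : pairGroup I × P | p = (1, x) ∨
        ((p.1 : M ≃ᵢ M) = I (bar s) ∧ (p.2 : M) = I s (x : M))} ∧
      {A : Set M | ∃ p ∈ fiberAt P face I x, A = (p.1 : M ≃ᵢ M) '' P} =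
        {P, ⇑(I (bar s)) '' P} := by
  obtain ⟨hxP, hxint⟩ := hx
  have hxU : (x : M) ∈ ⋃ s, face s := by rw [hpoly.face_union]; exact ⟨hxP, hxint⟩
  obtain ⟨s₀, hs₀⟩ := Set.mem_iUnion.mp hxU
  have hnotbdry : ∀ t, (x : M) ∉ bdry t := by
    intro t ht
    rw [hcorner.bdry_eq] at ht
    obtain ⟨e, -, he⟩ := Set.mem_iUnion₂.mp ht
    exact hxe e he
  have huniq : ∀ s', (x : M) ∈ face s' → s' = s₀ := by
    intro s' hs'
    by_contra hne
    exact hnotbdry s₀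
      (hcorner.inter_subset_bdry s₀ s' (fun h => hne h.symm) ⟨hs₀, hs'⟩).1
  have barinj : ∀ t, bar t = bar s₀ → t = s₀ := by
    intro t h
    have h2 := congrArg bar h
    rwa [hpoly.bar_invol, hpoly.bar_invol] at h2
  have hyface : (I s₀ (x : M)) ∈ face (bar s₀) := by
    rw [← hpoly.I_face]; exact ⟨_, hs₀, rfl⟩
  have hyP : (I s₀ (x : M)) ∈ P := by
    have h : (I s₀ (x : M)) ∈ ⋃ s, face s := Set.mem_iUnion.mpr ⟨_, hyface⟩
    rw [hpoly.face_union] at h; exact h.1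
  have hIbar : I (bar s₀) = (I s₀)⁻¹ := hpoly.I_bar s₀
  have hIback : ∀ z : M, I (bar s₀) (I s₀ z) = z := by intro z; rw [hIbar]; simp
  have hIback' : ∀ z : M, I s₀ (I (bar s₀) z) = z := by intro z; rw [hIbar]; simp
  have hyuniq : ∀ t, (I s₀ (x : M)) ∈ face t → t = bar s₀ := by
    intro t ht
    by_contra hne
    have hb := (hcorner.inter_subset_bdry (bar s₀) t (fun h => hne h.symm)
      ⟨hyface, ht⟩).1
    rw [hcorner.bdry_eq] at hb
    obtain ⟨e, hde, hye⟩ := Set.mem_iUnion₂.mp hb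
    obtain ⟨e', -, himg⟩ := hcorner.I_edge e (bar s₀) hde
    exact hxe e' (himg ▸ ⟨_, hye, hIback _⟩)
  have hIbar_mem : I (bar s₀) ∈ pairGroup I :=
    Subgroup.subset_closure ⟨bar s₀, rfl⟩
  set F : Set (pairGroup I × P) := {p : pairGroup I × P | p = (1, x) ∨
    ((p.1 : M ≃ᵢ M) = I (bar s₀) ∧ (p.2 : M) = I s₀ (x : M))} with hF
  -- key invariance of membership in F under the basic relation
  have key : ∀ p q, pairRel P face I p q → (p ∈ F ↔ q ∈ F) := by
    rintro ⟨g, z⟩ ⟨h, w⟩ ⟨t, hz, hIz, hgh⟩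
    dsimp only at hz hIz hgh
    have hhgI : (h : M ≃ᵢ M) = (g : M ≃ᵢ M) * (I t)⁻¹ := by
      rw [← hgh]; group
    constructor
    · rintro (heq | ⟨hg, hz2⟩)
      · obtain ⟨hg0, hz0⟩ := Prod.mk.inj heq
        have hgc : (g : M ≃ᵢ M) = 1 := by rw [hg0]; rfl
        have hzc : (z : M) = (x : M) := by rw [hz0]
        have ht0 : t = s₀ := huniq t (hzc ▸ hz)
        refine Or.inr ⟨?_, by rw [← hIz, hzc, ht0]⟩
        rw [hhgI, hgc, ht0, hIbar]
        simp
      · have ht0 : t = bar s₀ := hyuniq t (hz2 ▸ hz)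
        have hw1 : (w : M) = (x : M) := by rw [← hIz, hz2, ht0, hIback]
        have hh1 : (h : M ≃ᵢ M) = 1 := by rw [hhgI, hg, ht0, hIbar]; simp
        exact Or.inl (Prod.ext (Subtype.ext hh1) (Subtype.ext hw1))
    · rintro (heq | ⟨hh, hw2⟩)
      · obtain ⟨hh0, hw0⟩ := Prod.mk.inj heq
        have hhc : (h : M ≃ᵢ M) = 1 := by rw [hh0]; rfl
        have hwc : (w : M) = (x : M) := by rw [hw0]
        have hxft : (x : M) ∈ face (bar t) := by
          rw [← hpoly.I_face]; exact ⟨(z : M), hz, by rw [hIz, hwc]⟩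
        have ht0 : t = bar s₀ := by
          have h1 := congrArg bar (huniq (bar t) hxft)
          rwa [hpoly.bar_invol] at h1
        have hg1 : (g : M ≃ᵢ M) = I (bar s₀) := by
          have h2 : (g : M ≃ᵢ M) = I t := by rw [← hgh, hhc]; simp
          rw [h2, ht0]
        have hz1 : (z : M) = I s₀ (x : M) := by
          have h2 : I (bar s₀) (z : M) = (x : M) := by rw [← ht0, hIz, hwc]
          rw [← h2, hIback']
        exact Or.inr ⟨hg1, hz1⟩
      · have ht0 : t = s₀ := by
          have hyft : (I s₀ (x : M)) ∈ face (bar t) := by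
            rw [← hpoly.I_face]; exact ⟨(z : M), hz, by rw [hIz, hw2]⟩
          exact barinj t (hyuniq (bar t) hyft)
        have hg1 : (g : M ≃ᵢ M) = 1 := by
          have h3 : (g : M ≃ᵢ M) = (h : M ≃ᵢ M) * I t := by
            rw [← hgh, mul_inv_cancel_left]
          rw [h3, hh, ht0, hIbar, inv_mul_cancel]
        have hz1 : (z : M) = (x : M) := by
          have h4 : I s₀ (z : M) = I s₀ (x : M) := by
            rw [← ht0, hIz, hw2, ht0]
          exact (I s₀).injective h4
        exact Or.inl (Prod.ext (Subtype.ext hg1) (Subtype.ext hz1))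
  -- the fibre equals F
  have hfib : fiberAt P face I x = F := by
    ext p
    constructor
    · intro hp
      have hinv : ∀ a b, pairRel P face I a b → (a ∈ F) = (b ∈ F) :=
        fun a b hab => propext (key a b hab)
      have h5 := congrArg (Quot.lift (· ∈ F) hinv) hp
      simp only [Quot.lift_mk] at h5
      rw [show ((p ∈ F) = (((1 : pairGroup I), x) ∈ F)) from h5]
      exact Or.inl rfl
    · rintro (rfl | ⟨hg, hz⟩)
      · rfl
      · have hrel : pairRel P face I (1, x) p := by
          refine ⟨s₀, hs₀, hz.symm, ?_⟩
          rw [hg]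
          simp [hIbar]
        exact (Quot.sound hrel).symm
  refine ⟨s₀, hs₀, huniq, hfib, ?_⟩
  rw [hfib]
  ext A
  constructor
  · rintro ⟨p, hp, rfl⟩
    rcases hp with rfl | ⟨hg, -⟩
    · left; simp
    · right; rw [hg]; exact rfl
  · rintro (rfl | rfl)
    · exact ⟨(1, x), Or.inl rfl, by simp⟩
    · exact ⟨(⟨I (bar s₀), hIbar_mem⟩, ⟨I s₀ (x : M), hyP⟩),
        Or.inr ⟨rfl, rfl⟩, rfl⟩
end
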